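/- The first negative isospectral Ablowitz–Ladik flow and the zeroth non-isospectral flow satisfy ⟦K⁻¹, σ⁰⟧(u)(n) = −K⁻¹(u)(n) for every u and every n ∈ ℤ; that is, (K⁻¹)′(u)[σ⁰(u)](n) − (σ⁰)′(u)[K⁻¹(u)](n) = −K⁻¹(u)(n), where both Gateaux derivatives exist. -/

import Mathlib

/-- A quadruple of real sequences `u = (Q, R, S, T)`. -/
abbrev ALQuad : Type := (ℤ → ℝ) × (ℤ → ℝ) × (ℤ → ℝ) × (ℤ → ℝ)

/-- Evaluation of a quadruple of sequences at `n`, as a vector in `ℝ⁴`. -/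
def evalQ (u : ALQuad) (n : ℤ) : ℝ × ℝ × ℝ × ℝ :=
  (u.1 n, u.2.1 n, u.2.2.1 n, u.2.2.2 n)

/-- The zeroth isospectral four-potential Ablowitz–Ladik flow `K⁰`. -/
def K0 (u : ALQuad) : ALQuad :=
  (fun n => u.1 n, fun n => -u.2.1 n, fun n => u.2.2.1 n, fun n => -u.2.2.2 n)

/-- The first positive isospectral four-potential Ablowitz–Ladik flow `K¹`. -/
def K1 (u : ALQuad) : ALQuad :=
  (fun n => (1 - u.1 n * u.2.1 n) * u.2.2.1 n,
   fun n => -((1 - u.1 n * u.2.1 n) * u.2.2.2 (n - 1)),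
   fun n => (1 - u.2.2.1 n * u.2.2.2 n) * u.1 (n + 1),
   fun n => -((1 - u.2.2.1 n * u.2.2.2 n) * u.2.1 n))

/-- The first negative isospectral four-potential Ablowitz–Ladik flow `K⁻¹`. -/
def Kneg1 (u : ALQuad) : ALQuad :=
  (fun n => (1 - u.1 n * u.2.1 n) * u.2.2.1 (n - 1),
   fun n => -((1 - u.1 n * u.2.1 n) * u.2.2.2 n),
   fun n => (1 - u.2.2.1 n * u.2.2.2 n) * u.1 n,
   fun n => -((1 - u.2.2.1 n * u.2.2.2 n) * u.2.1 (n + 1)))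

/-- The zeroth non-isospectral four-potential Ablowitz–Ladik flow `σ⁰`. -/
noncomputable def sigma0 (u : ALQuad) : ALQuad :=
  (fun n => (2 * (n : ℝ) + 1 / 2) * u.1 n,
   fun n => -((2 * (n : ℝ) + 1 / 2) * u.2.1 n),
   fun n => (2 * (n : ℝ) + 3 / 2) * u.2.2.1 n,
   fun n => -((2 * (n : ℝ) + 3 / 2) * u.2.2.2 n))

/-!
`σ⁰` is linear, so `(σ⁰)′(u)[v] = σ⁰(v)`; it multiplies `Q(n), R(n)` by `±(2n + 1/2)` and
`S(n), T(n)` by `±(2n + 3/2)`. The weights of `Q, R` (and of `S, T`) at one site are opposite,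
so `QR` and `ST` are stationary along `σ⁰(u)`: hence `(K⁻¹)′(u)[σ⁰(u)]` multiplies each component
of `K⁻¹(u)` by the weight of its last factor `S(n−1)`, `T(n)`, `Q(n)`, `R(n+1)`, while
`σ⁰(K⁻¹(u))` multiplies it by the weight of its own slot. In every component the two weights
differ by exactly `1`, e.g. `2(n − 1) + 3/2 = (2n + 1/2) − 1`.
-/

theorem hasDerivAt_add_smul_apply {α : Type*} (f g : α → ℝ) (m : α) :
    HasDerivAt (fun ε : ℝ => (f + ε • g) m) (g m) 0 := by
  simpa using ((hasDerivAt_id (0 : ℝ)).mul_const (g m)).const_add (f m)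

theorem HasDerivAt.one_sub_mul_mul {p q r : ℝ → ℝ} {p' q' r' x : ℝ} (hp : HasDerivAt p p' x)
    (hq : HasDerivAt q q' x) (hr : HasDerivAt r r' x) :
    HasDerivAt (fun ε => (1 - p ε * q ε) * r ε)
      ((1 - p x * q x) * r' - (p' * q x + p x * q') * r x) x :=
  (((hasDerivAt_const x (1 : ℝ)).sub (hp.mul hq)).mul hr).congr_deriv
    (by simp only [Pi.sub_apply, Pi.mul_apply]; ring)

theorem hasDerivAt_evalQ_add_smul (u v : ALQuad) (n : ℤ) :
    HasDerivAt (fun ε : ℝ => evalQ (u + ε • v) n) (evalQ v n) 0 :=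
  (hasDerivAt_add_smul_apply u.1 v.1 n).prodMk <|
    (hasDerivAt_add_smul_apply u.2.1 v.2.1 n).prodMk <|
    (hasDerivAt_add_smul_apply u.2.2.1 v.2.2.1 n).prodMk
    (hasDerivAt_add_smul_apply u.2.2.2 v.2.2.2 n)

def kneg1Deriv (u v : ALQuad) : ALQuad :=
  (fun n => (1 - u.1 n * u.2.1 n) * v.2.2.1 (n - 1)
      - (v.1 n * u.2.1 n + u.1 n * v.2.1 n) * u.2.2.1 (n - 1),
   fun n => -((1 - u.1 n * u.2.1 n) * v.2.2.2 n
      - (v.1 n * u.2.1 n + u.1 n * v.2.1 n) * u.2.2.2 n),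
   fun n => (1 - u.2.2.1 n * u.2.2.2 n) * v.1 n
      - (v.2.2.1 n * u.2.2.2 n + u.2.2.1 n * v.2.2.2 n) * u.1 n,
   fun n => -((1 - u.2.2.1 n * u.2.2.2 n) * v.2.1 (n + 1)
      - (v.2.2.1 n * u.2.2.2 n + u.2.2.1 n * v.2.2.2 n) * u.2.1 (n + 1)))

theorem hasDerivAt_evalQ_Kneg1 (u v : ALQuad) (n : ℤ) :
    HasDerivAt (fun ε : ℝ => evalQ (Kneg1 (u + ε • v)) n) (evalQ (kneg1Deriv u v) n) 0 := by
  have coord := @hasDerivAt_add_smul_apply ℤ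
  refine (((coord u.1 v.1 n).one_sub_mul_mul (coord u.2.1 v.2.1 n)
      (coord u.2.2.1 v.2.2.1 (n - 1))).prodMk <|
    ((coord u.1 v.1 n).one_sub_mul_mul (coord u.2.1 v.2.1 n)
      (coord u.2.2.2 v.2.2.2 n)).neg.prodMk <|
    ((coord u.2.2.1 v.2.2.1 n).one_sub_mul_mul (coord u.2.2.2 v.2.2.2 n)
      (coord u.1 v.1 n)).prodMk
    ((coord u.2.2.1 v.2.2.1 n).one_sub_mul_mul (coord u.2.2.2 v.2.2.2 n)
      (coord u.2.1 v.2.1 (n + 1))).neg).congr_deriv ?_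
  simp only [zero_smul, Pi.add_apply, Pi.zero_apply, add_zero, neg_sub, evalQ, kneg1Deriv]

theorem sigma0_add_smul (u v : ALQuad) (ε : ℝ) :
    sigma0 (u + ε • v) = sigma0 u + ε • sigma0 v := by
  simp only [sigma0, Prod.mk_add_mk, Prod.smul_mk, Prod.mk.injEq]
  refine ⟨?_, ?_, ?_, ?_⟩ <;> funext m <;> simp only [Prod.fst_add, Prod.snd_add, Prod.smul_fst,
    Prod.smul_snd, Pi.add_apply, Pi.smul_apply, smul_eq_mul] <;> ring

theorem kneg1Deriv_sigma0_sub_sigma0_Kneg1 (u : ALQuad) (n : ℤ) :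
    evalQ (kneg1Deriv u (sigma0 u)) n - evalQ (sigma0 (Kneg1 u)) n = -evalQ (Kneg1 u) n := by
  simp only [evalQ, kneg1Deriv, sigma0, Kneg1, Prod.mk_sub_mk, Prod.neg_mk, Prod.mk.injEq]
  push_cast
  refine ⟨?_, ?_, ?_, ?_⟩ <;> ring

/-- `⟦K⁻¹, σ⁰⟧(u)(n) = −K⁻¹(u)(n)`: both Gateaux derivatives `(K⁻¹)′(u)[σ⁰(u)](n)` and
`(σ⁰)′(u)[K⁻¹(u)](n)` exist, and their difference equals `−K⁻¹(u)(n)`. -/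
theorem AL_bracket_Kneg1_sigma0 (u : ALQuad) (n : ℤ) :
    ∃ d₁ d₂ : ℝ × ℝ × ℝ × ℝ,
      HasDerivAt (fun ε : ℝ => evalQ (Kneg1 (u + ε • sigma0 u)) n) d₁ 0 ∧
      HasDerivAt (fun ε : ℝ => evalQ (sigma0 (u + ε • Kneg1 u)) n) d₂ 0 ∧
      d₁ - d₂ = -evalQ (Kneg1 u) n := by
  refine ⟨_, _, hasDerivAt_evalQ_Kneg1 u (sigma0 u) n, ?_, kneg1Deriv_sigma0_sub_sigma0_Kneg1 u n⟩
  simpa only [sigma0_add_smul] using hasDerivAt_evalQ_add_smul (sigma0 u) (sigma0 (Kneg1 u)) n
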